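/- Let π_Shift be the permutation of {1,…,8} given by π_Shift(i) = i + 1 (mod 8, with representatives in {1,…,8}), and let P_Shift = (1/√2)·[[1,−1],[1,1]], Q_Shift = (1/√2)·[[−1,1],[1,1]]. Then A_{π_Shift(i)} = P_Shift·Aᵢ·Q_Shift for every i in {1,…,8}, where A₁,…,A₈ are the eight direction matrices. -/
import Mathlib


/-- The eight direction matrices `A₁, …, A₈` as real matrices (indexed by `Fin 8`,
with index `i` corresponding to direction `i + 1`). -/
def dirMatR : Fin 8 → Matrix (Fin 2) (Fin 2) ℝ :=
  ![!![0, 1; 1, 0], !![1, 0; 0, 1], !![-1, 0; 0, 1], !![0, -1; 1, 0],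
    !![0, -1; -1, 0], !![-1, 0; 0, -1], !![1, 0; 0, -1], !![0, 1; -1, 0]]

noncomputable def PShift : Matrix (Fin 2) (Fin 2) ℝ := (Real.sqrt 2)⁻¹ • !![1, -1; 1, 1]
noncomputable def QShift : Matrix (Fin 2) (Fin 2) ℝ := (Real.sqrt 2)⁻¹ • !![-1, 1; 1, 1]

/-- `π_Shift` sends direction `i` to `i + 1` (cyclically); it is an equivalence
permutation induced by `P_Shift` and `Q_Shift`. -/
theorem shift_is_equivalence_permutation (i : Fin 8) :
    dirMatR (i + 1) = PShift * dirMatR i * QShift := by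
  have h2 : (Real.sqrt 2)⁻¹ * (Real.sqrt 2)⁻¹ = 2⁻¹ := by
    rw [← mul_inv]
    norm_num [Real.mul_self_sqrt]
  fin_cases i <;>
    · simp only [dirMatR, PShift, QShift, Matrix.smul_mul, Matrix.mul_smul, smul_smul, h2]
      norm_num [Matrix.mul_fin_two, ← Matrix.ext_iff, Fin.forall_fin_two, Fin.add_def, Matrix.cons_val_zero, Matrix.cons_val_one]
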